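/- arXiv:1003.2432 — 8 statements merged into one kernel-verified Lean document; each statement's English description precedes it below -/
import Mathlib

section
/- If (R,P) is a Rota-Baxter algebra of weight 0 over a commutative ring k, then the operations x ≺ y := x·P(y) and x ≻ y := P(x)·y make R into a dendriform dialgebra, i.e., (x≺y)≺z = x≺(y⋆z), (x≻y)≺z = x≻(y≺z), and x≻(y≻z) = (x⋆y)≻z, where x⋆y = x≺y + x≻y. -/
theorem map_mul_map_add_map_mul {k R : Type*} [CommSemiring k] [AddCommMonoid R]
    [Module k R] (mul : R →ₗ[k] R →ₗ[k] R) (P : R →ₗ[k] R)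
    (hP : ∀ x y : R, mul (P x) (P y) = P (mul (P x) y) + P (mul x (P y))) (y z : R) :
    P (mul y (P z) + mul (P y) z) = mul (P y) (P z) := by
  rw [map_add, add_comm, hP]

/-- A Rota-Baxter algebra (R, P) of weight 0 over a commutative ring k
gives a dendriform dialgebra via x ≺ y = x·P(y), x ≻ y = P(x)·y. -/
theorem rota_baxter_weight_zero_dendriform
    (k : Type*) [CommRing k] (R : Type*) [AddCommGroup R] [Module k R]
    (mul : R →ₗ[k] R →ₗ[k] R)
    (mul_assoc : ∀ x y z : R, mul (mul x y) z = mul x (mul y z))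
    (P : R →ₗ[k] R)
    (hP : ∀ x y : R, mul (P x) (P y) = P (mul (P x) y) + P (mul x (P y))) :
    ∀ x y z : R,
      -- (x ≺ y) ≺ z = x ≺ (y ⋆ z)
      mul (mul x (P y)) (P z)
        = mul x (P (mul y (P z) + mul (P y) z)) ∧
      -- (x ≻ y) ≺ z = x ≻ (y ≺ z)
      mul (mul (P x) y) (P z) = mul (P x) (mul y (P z)) ∧
      -- x ≻ (y ≻ z) = (x ⋆ y) ≻ z
      mul (P x) (mul (P y) z)
        = mul (P (mul x (P y) + mul (P x) y)) z := by
  intro x y z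
  refine ⟨?_, mul_assoc _ _ _, ?_⟩
  · rw [map_mul_map_add_map_mul mul P hP, mul_assoc]
  · rw [map_mul_map_add_map_mul mul P hP, mul_assoc]
end

section
/- If (R,P) is a Rota-Baxter algebra of weight λ over a commutative ring k, then the operations x ≺ y := x·P(y), x ≻ y := P(x)·y, and x • y := λ(x·y) make R into a dendriform trialgebra. -/
/-! The Rota–Baxter identity says precisely that `P (x ⋆ y) = P x · P y`. Together with
associativity this gives the three axioms in which `⋆` occurs, with `P (y ⋆ z)` or
`P (x ⋆ y)` traded for a product of two values of `P`; the four remaining axioms only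
move scalars and brackets. -/

theorem rotaBaxter_map_star {k R : Type*} [CommSemiring k] [AddCommMonoid R] [Module k R]
    (mul : R →ₗ[k] R →ₗ[k] R) (lam : k) (P : R →ₗ[k] R)
    (hP : ∀ x y : R,
      mul (P x) (P y) = P (mul (P x) y) + P (mul x (P y)) + lam • P (mul x y))
    (x y : R) :
    P (mul x (P y) + mul (P x) y + lam • mul x y) = mul (P x) (P y) := by
  rw [hP, map_add, map_add, map_smul, add_comm (P (mul x (P y)))]

/-- A Rota-Baxter algebra (R,P) of weight λ gives a dendriform
trialgebra via x ≺ y = x·P(y), x ≻ y = P(x)·y, x • y = λ(x·y). -/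
theorem rota_baxter_dendriform_trialgebra
    (k : Type*) [CommRing k] (R : Type*) [AddCommGroup R] [Module k R]
    (mul : R →ₗ[k] R →ₗ[k] R)
    (mul_assoc : ∀ x y z : R, mul (mul x y) z = mul x (mul y z))
    (lam : k) (P : R →ₗ[k] R)
    (hP : ∀ x y : R,
      mul (P x) (P y) = P (mul (P x) y) + P (mul x (P y)) + lam • P (mul x y)) :
    ∀ x y z : R,
      -- ⋆ abbreviations: x ⋆ y = x ≺ y + x ≻ y + x • y
      -- (x ≺ y) ≺ z = x ≺ (y ⋆ z)
      mul (mul x (P y)) (P z)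
        = mul x (P (mul y (P z) + mul (P y) z + lam • mul y z)) ∧
      -- (x ≻ y) ≺ z = x ≻ (y ≺ z)
      mul (mul (P x) y) (P z) = mul (P x) (mul y (P z)) ∧
      -- (x ⋆ y) ≻ z = x ≻ (y ≻ z)
      mul (P (mul x (P y) + mul (P x) y + lam • mul x y)) z
        = mul (P x) (mul (P y) z) ∧
      -- (x ≻ y) • z = x ≻ (y • z)
      lam • mul (mul (P x) y) z = mul (P x) (lam • mul y z) ∧
      -- (x ≺ y) • z = x • (y ≻ z)
      lam • mul (mul x (P y)) z = lam • mul x (mul (P y) z) ∧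
      -- (x • y) ≺ z = x • (y ≺ z)
      mul (lam • mul x y) (P z) = lam • mul x (mul y (P z)) ∧
      -- (x • y) • z = x • (y • z)
      lam • mul (lam • mul x y) z = lam • mul x (lam • mul y z) := by
  intro x y z
  have map_star := rotaBaxter_map_star mul lam P hP
  refine ⟨?_, mul_assoc _ _ _, ?_, ?_, ?_, ?_, ?_⟩
  · rw [mul_assoc, map_star]
  · rw [map_star, mul_assoc]
  · rw [mul_assoc, map_smul]
  · rw [mul_assoc]
  · rw [map_smul, LinearMap.smul_apply, mul_assoc]
  · rw [map_smul, map_smul, LinearMap.smul_apply, mul_assoc]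
end

section
/- Let (A,*) be an associative algebra, (R,∘,ℓ,r) an A-bimodule k-algebra, and α : R → A an O-operator on the algebra R of weight λ. Then the operations u ≺ v := u r(α(v)), u ≻ v := ℓ(α(u))v, u • v := λ(u∘v) define a dendriform trialgebra structure on R. -/
/-!
The weight-λ O-operator identity says precisely that `α` is multiplicative for the total product
`u ⋆ v = u ≺ v + u ≻ v + u • v`, i.e. `α (u ⋆ v) = α u * α v`. With this, the two axioms involving
`⋆` reduce to `ℓ` being a left and `r` a right action of `A`; the remaining five are the
bimodule-algebra compatibilities and the associativity of `∘`, scaled by `λ`.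
-/

theorem map_dendriform_sum_eq_mul {k A R : Type*} [CommRing k] [AddCommGroup A] [Module k A]
    [AddCommGroup R] [Module k R] (mulA : A →ₗ[k] A →ₗ[k] A) (mulR : R →ₗ[k] R →ₗ[k] R)
    (l r : A →ₗ[k] Module.End k R) (lam : k) (α : R →ₗ[k] A)
    (hα : ∀ u v : R,
      mulA (α u) (α v) = α (l (α u) v) + α (r (α v) u) + lam • α (mulR u v))
    (u v : R) :
    α (r (α v) u + l (α u) v + lam • mulR u v) = mulA (α u) (α v) := by
  rw [map_add, map_add, map_smul, hα u v]
  abel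

/-- `l x v` is ℓ(x)v and `r x v` is v r(x). -/
theorem O_operator_dendriform_trialgebra_domain_general
    (k : Type*) [CommRing k]
    (A : Type*) [AddCommGroup A] [Module k A]
    (R : Type*) [AddCommGroup R] [Module k R]
    (mulA : A →ₗ[k] A →ₗ[k] A)
    (mulR : R →ₗ[k] R →ₗ[k] R)
    (mulR_assoc : ∀ u v w : R, mulR (mulR u v) w = mulR u (mulR v w))
    (l r : A →ₗ[k] Module.End k R)
    (hl : ∀ x y : A, ∀ v : R, l (mulA x y) v = l x (l y v))
    (hr : ∀ x y : A, ∀ v : R, r (mulA x y) v = r y (r x v))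
    (hlr : ∀ x y : A, ∀ v : R, r y (l x v) = l x (r y v))
    (hc1 : ∀ x : A, ∀ v w : R, l x (mulR v w) = mulR (l x v) w)
    (hc2 : ∀ x : A, ∀ v w : R, r x (mulR v w) = mulR v (r x w))
    (hc3 : ∀ x : A, ∀ v w : R, mulR (r x v) w = mulR v (l x w))
    (lam : k) (α : R →ₗ[k] A)
    (hα : ∀ u v : R,
      mulA (α u) (α v)
        = α (l (α u) v) + α (r (α v) u) + lam • α (mulR u v)) :
    ∀ u v w : R,
      -- (u ≺ v) ≺ w = u ≺ (v ⋆ w)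
      r (α w) (r (α v) u)
        = r (α (r (α w) v + l (α v) w + lam • mulR v w)) u ∧
      -- (u ≻ v) ≺ w = u ≻ (v ≺ w)
      r (α w) (l (α u) v) = l (α u) (r (α w) v) ∧
      -- (u ⋆ v) ≻ w = u ≻ (v ≻ w)
      l (α (r (α v) u + l (α u) v + lam • mulR u v)) w
        = l (α u) (l (α v) w) ∧
      -- (u ≻ v) • w = u ≻ (v • w)
      lam • mulR (l (α u) v) w = l (α u) (lam • mulR v w) ∧
      -- (u ≺ v) • w = u • (v ≻ w)
      lam • mulR (r (α v) u) w = lam • mulR u (l (α v) w) ∧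
      -- (u • v) ≺ w = u • (v ≺ w)
      r (α w) (lam • mulR u v) = lam • mulR u (r (α w) v) ∧
      -- (u • v) • w = u • (v • w)
      lam • mulR (lam • mulR u v) w = lam • mulR u (lam • mulR v w) := by
  intro u v w
  have hαmul := map_dendriform_sum_eq_mul mulA mulR l r lam α hα
  refine ⟨?_, hlr (α u) (α w) v, ?_, ?_, ?_, ?_, ?_⟩
  · rw [hαmul, hr]
  · rw [hαmul, hl]
  · rw [map_smul, hc1]
  · rw [hc3]
  · rw [map_smul, hc2]
  · simp only [map_smul, LinearMap.smul_apply, smul_smul, mulR_assoc]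

/-- An O-operator α : R → A on an A-bimodule k-algebra
(R,∘,ℓ,r) of weight λ induces a dendriform trialgebra structure on R via
u ≺ v = u r(α(v)), u ≻ v = ℓ(α(u))v, u • v = λ(u∘v). Here `l x v` is ℓ(x)v
and `r x v` is v r(x). -/
theorem O_operator_dendriform_trialgebra_domain
    (k : Type*) [CommRing k]
    (A : Type*) [AddCommGroup A] [Module k A]
    (R : Type*) [AddCommGroup R] [Module k R]
    (mulA : A →ₗ[k] A →ₗ[k] A)
    (mulA_assoc : ∀ x y z : A, mulA (mulA x y) z = mulA x (mulA y z))
    (mulR : R →ₗ[k] R →ₗ[k] R)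
    (mulR_assoc : ∀ u v w : R, mulR (mulR u v) w = mulR u (mulR v w))
    (l r : A →ₗ[k] Module.End k R)
    (hl : ∀ x y : A, ∀ v : R, l (mulA x y) v = l x (l y v))
    (hr : ∀ x y : A, ∀ v : R, r (mulA x y) v = r y (r x v))
    (hlr : ∀ x y : A, ∀ v : R, r y (l x v) = l x (r y v))
    (hc1 : ∀ x : A, ∀ v w : R, l x (mulR v w) = mulR (l x v) w)
    (hc2 : ∀ x : A, ∀ v w : R, r x (mulR v w) = mulR v (r x w))
    (hc3 : ∀ x : A, ∀ v w : R, mulR (r x v) w = mulR v (l x w))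
    (lam : k) (α : R →ₗ[k] A)
    (hα : ∀ u v : R,
      mulA (α u) (α v)
        = α (l (α u) v) + α (r (α v) u) + lam • α (mulR u v)) :
    ∀ u v w : R,
      -- (u ≺ v) ≺ w = u ≺ (v ⋆ w)
      r (α w) (r (α v) u)
        = r (α (r (α w) v + l (α v) w + lam • mulR v w)) u ∧
      -- (u ≻ v) ≺ w = u ≻ (v ≺ w)
      r (α w) (l (α u) v) = l (α u) (r (α w) v) ∧
      -- (u ⋆ v) ≻ w = u ≻ (v ≻ w)
      l (α (r (α v) u + l (α u) v + lam • mulR u v)) w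
        = l (α u) (l (α v) w) ∧
      -- (u ≻ v) • w = u ≻ (v • w)
      lam • mulR (l (α u) v) w = l (α u) (lam • mulR v w) ∧
      -- (u ≺ v) • w = u • (v ≻ w)
      lam • mulR (r (α v) u) w = lam • mulR u (l (α v) w) ∧
      -- (u • v) ≺ w = u • (v ≺ w)
      r (α w) (lam • mulR u v) = lam • mulR u (r (α w) v) ∧
      -- (u • v) • w = u • (v • w)
      lam • mulR (lam • mulR u v) w = lam • mulR u (lam • mulR v w) :=
  O_operator_dendriform_trialgebra_domain_general k A R mulA mulR mulR_assoc l r hl hr hlr hc1 hc2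
    hc3 lam α hα
end

section
/- Let (A,*) be an associative algebra, (R,∘,ℓ,r) an A-bimodule k-algebra, and α : R → A an O-operator on the algebra R of weight λ. Define ⋆ on R by u ⋆ v := u r(α(v)) + ℓ(α(u))v + λ(u∘v). Then ⋆ is an associative product on R and α : (R,⋆) → (A,*) is a k-algebra homomorphism. -/
/-!
Applying `α` to `u ⋆ v` and using linearity, the O-operator identity says exactly that
`α (u ⋆ v) = α u * α v`. With this, both `(u ⋆ v) ⋆ w` and `u ⋆ (v ⋆ w)` expand into the same
seven terms: the actions of `α u * α v` and `α v * α w` split by the bimodule laws, and the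
remaining products are matched by the compatibility of `ℓ`, `r` with `∘` and associativity of `∘`.
-/

section OOperator

variable {k A R : Type*} [CommRing k] [AddCommGroup A] [Module k A] [AddCommGroup R] [Module k R]
  (mulA : A →ₗ[k] A →ₗ[k] A) (mulR : R →ₗ[k] R →ₗ[k] R) (l r : A →ₗ[k] Module.End k R)
  (lam : k) (α : R →ₗ[k] A)

def IsOOperator : Prop :=
  ∀ u v : R, mulA (α u) (α v) = α (l (α u) v) + α (r (α v) u) + lam • α (mulR u v)

def oStar (u v : R) : R :=
  r (α v) u + l (α u) v + lam • mulR u v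

variable {mulA mulR l r lam α}

theorem IsOOperator.map_oStar (hα : IsOOperator mulA mulR l r lam α) (u v : R) :
    α (oStar mulR l r lam α u v) = mulA (α u) (α v) := by
  rw [hα u v, oStar]
  simp only [map_add, map_smul]
  abel

theorem oStar_assoc
    (mulR_assoc : ∀ u v w : R, mulR (mulR u v) w = mulR u (mulR v w))
    (hl : ∀ x y : A, ∀ v : R, l (mulA x y) v = l x (l y v))
    (hr : ∀ x y : A, ∀ v : R, r (mulA x y) v = r y (r x v))
    (hlr : ∀ x y : A, ∀ v : R, r y (l x v) = l x (r y v))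
    (hc1 : ∀ x : A, ∀ v w : R, l x (mulR v w) = mulR (l x v) w)
    (hc2 : ∀ x : A, ∀ v w : R, r x (mulR v w) = mulR v (r x w))
    (hc3 : ∀ x : A, ∀ v w : R, mulR (r x v) w = mulR v (l x w))
    (hom : ∀ u v : R, α (oStar mulR l r lam α u v) = mulA (α u) (α v)) (u v w : R) :
    oStar mulR l r lam α (oStar mulR l r lam α u v) w =
      oStar mulR l r lam α u (oStar mulR l r lam α v w) := by
  conv_lhs => rw [oStar, hom]
  conv_rhs => rw [oStar, hom]
  simp only [oStar, map_add, map_smul, LinearMap.add_apply, LinearMap.smul_apply, smul_add,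
    hl, hr, hlr, hc1, hc2, hc3, mulR_assoc]
  abel

end OOperator

theorem O_operator_star_assoc_and_hom_general
    (k : Type*) [CommRing k]
    (A : Type*) [AddCommGroup A] [Module k A]
    (R : Type*) [AddCommGroup R] [Module k R]
    (mulA : A →ₗ[k] A →ₗ[k] A)
    (mulR : R →ₗ[k] R →ₗ[k] R)
    (mulR_assoc : ∀ u v w : R, mulR (mulR u v) w = mulR u (mulR v w))
    (l r : A →ₗ[k] Module.End k R)
    (hl : ∀ x y : A, ∀ v : R, l (mulA x y) v = l x (l y v))
    (hr : ∀ x y : A, ∀ v : R, r (mulA x y) v = r y (r x v))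
    (hlr : ∀ x y : A, ∀ v : R, r y (l x v) = l x (r y v))
    (hc1 : ∀ x : A, ∀ v w : R, l x (mulR v w) = mulR (l x v) w)
    (hc2 : ∀ x : A, ∀ v w : R, r x (mulR v w) = mulR v (r x w))
    (hc3 : ∀ x : A, ∀ v w : R, mulR (r x v) w = mulR v (l x w))
    (lam : k) (α : R →ₗ[k] A)
    (hα : ∀ u v : R,
      mulA (α u) (α v)
        = α (l (α u) v) + α (r (α v) u) + lam • α (mulR u v)) :
    -- ⋆ is associative:
    (∀ u v w : R,
      (fun a b : R => r (α b) a + l (α a) b + lam • mulR a b)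
          ((fun a b : R => r (α b) a + l (α a) b + lam • mulR a b) u v) w
        = (fun a b : R => r (α b) a + l (α a) b + lam • mulR a b) u
            ((fun a b : R => r (α b) a + l (α a) b + lam • mulR a b) v w)) ∧
    -- α is a k-algebra homomorphism from (R,⋆) to (A,*):
    (∀ u v : R,
      α (r (α v) u + l (α u) v + lam • mulR u v) = mulA (α u) (α v)) := by
  have hom := IsOOperator.map_oStar hα
  exact ⟨oStar_assoc mulR_assoc hl hr hlr hc1 hc2 hc3 hom, hom⟩

/-- For an O-operator α : R → A on an A-bimodule k-algebra of
weight λ, the product u ⋆ v = u r(α(v)) + ℓ(α(u))v + λ(u∘v) is associative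
and α : (R,⋆) → (A,*) is an algebra homomorphism. -/
theorem O_operator_star_assoc_and_hom
    (k : Type*) [CommRing k]
    (A : Type*) [AddCommGroup A] [Module k A]
    (R : Type*) [AddCommGroup R] [Module k R]
    (mulA : A →ₗ[k] A →ₗ[k] A)
    (mulA_assoc : ∀ x y z : A, mulA (mulA x y) z = mulA x (mulA y z))
    (mulR : R →ₗ[k] R →ₗ[k] R)
    (mulR_assoc : ∀ u v w : R, mulR (mulR u v) w = mulR u (mulR v w))
    (l r : A →ₗ[k] Module.End k R)
    (hl : ∀ x y : A, ∀ v : R, l (mulA x y) v = l x (l y v))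
    (hr : ∀ x y : A, ∀ v : R, r (mulA x y) v = r y (r x v))
    (hlr : ∀ x y : A, ∀ v : R, r y (l x v) = l x (r y v))
    (hc1 : ∀ x : A, ∀ v w : R, l x (mulR v w) = mulR (l x v) w)
    (hc2 : ∀ x : A, ∀ v w : R, r x (mulR v w) = mulR v (r x w))
    (hc3 : ∀ x : A, ∀ v w : R, mulR (r x v) w = mulR v (l x w))
    (lam : k) (α : R →ₗ[k] A)
    (hα : ∀ u v : R,
      mulA (α u) (α v)
        = α (l (α u) v) + α (r (α v) u) + lam • α (mulR u v)) :
    -- ⋆ is associative: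
    (∀ u v w : R,
      (fun a b : R => r (α b) a + l (α a) b + lam • mulR a b)
          ((fun a b : R => r (α b) a + l (α a) b + lam • mulR a b) u v) w
        = (fun a b : R => r (α b) a + l (α a) b + lam • mulR a b) u
            ((fun a b : R => r (α b) a + l (α a) b + lam • mulR a b) v w)) ∧
    -- α is a k-algebra homomorphism from (R,⋆) to (A,*):
    (∀ u v : R,
      α (r (α v) u + l (α u) v + lam • mulR u v) = mulA (α u) (α v)) :=
  O_operator_star_assoc_and_hom_general k A R mulA mulR mulR_assoc l r hl hr hlr hc1 hc2 hc3 lam α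
    hα
end

section
/- Let (A,*) be an associative algebra, (V,ℓ,r) an A-bimodule, and α : V → A an O-operator on the module V. Then u ≺ v := u r(α(v)) and u ≻ v := ℓ(α(u))v define a dendriform dialgebra structure on V, and α : (V, ≺+≻) → (A,*) is a k-algebra homomorphism. -/
/-! Since α is an O-operator, it maps u ⋆ v = u r(α v) + ℓ(α u) v to α u * α v. The two outer
dendriform axioms are then the bimodule laws r(xy) = r(y) r(x) and ℓ(xy) = ℓ(x) ℓ(y) at
x = α u, y = α v, and the middle one is the commutation of the left and right actions. -/

namespace OOperator

variable {k A V : Type*} [CommRing k] [AddCommGroup A] [Module k A] [AddCommGroup V] [Module k V]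
  {mulA : A →ₗ[k] A →ₗ[k] A} {l r : A →ₗ[k] Module.End k V} {α : V →ₗ[k] A}

theorem map_star (hα : ∀ u v : V, mulA (α u) (α v) = α (l (α u) v) + α (r (α v) u)) (u v : V) :
    α (r (α v) u + l (α u) v) = mulA (α u) (α v) := by
  rw [map_add, add_comm, hα]

theorem prec_prec_eq_prec_star (hr : ∀ x y : A, ∀ v : V, r (mulA x y) v = r y (r x v))
    (hα : ∀ u v : V, mulA (α u) (α v) = α (l (α u) v) + α (r (α v) u)) (u v w : V) :
    r (α w) (r (α v) u) = r (α (r (α w) v + l (α v) w)) u := by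
  rw [map_star hα, hr]

theorem succ_succ_eq_star_succ (hl : ∀ x y : A, ∀ v : V, l (mulA x y) v = l x (l y v))
    (hα : ∀ u v : V, mulA (α u) (α v) = α (l (α u) v) + α (r (α v) u)) (u v w : V) :
    l (α u) (l (α v) w) = l (α (r (α v) u + l (α u) v)) w := by
  rw [map_star hα, hl]

end OOperator

theorem O_operator_dendriform_dialgebra_domain_general
    (k : Type*) [CommRing k]
    (A : Type*) [AddCommGroup A] [Module k A]
    (V : Type*) [AddCommGroup V] [Module k V]
    (mulA : A →ₗ[k] A →ₗ[k] A)
    (l r : A →ₗ[k] Module.End k V)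
    (hl : ∀ x y : A, ∀ v : V, l (mulA x y) v = l x (l y v))
    (hr : ∀ x y : A, ∀ v : V, r (mulA x y) v = r y (r x v))
    (hlr : ∀ x y : A, ∀ v : V, r y (l x v) = l x (r y v))
    (α : V →ₗ[k] A)
    (hα : ∀ u v : V,
      mulA (α u) (α v) = α (l (α u) v) + α (r (α v) u)) :
    (∀ u v w : V,
      -- (u ≺ v) ≺ w = u ≺ (v ⋆ w)
      r (α w) (r (α v) u) = r (α (r (α w) v + l (α v) w)) u ∧
      -- (u ≻ v) ≺ w = u ≻ (v ≺ w)
      r (α w) (l (α u) v) = l (α u) (r (α w) v) ∧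
      -- u ≻ (v ≻ w) = (u ⋆ v) ≻ w
      l (α u) (l (α v) w) = l (α (r (α v) u + l (α u) v)) w) ∧
    -- α is a k-algebra homomorphism from (V, ≺+≻) to (A,*)
    (∀ u v : V, α (r (α v) u + l (α u) v) = mulA (α u) (α v)) :=
  ⟨fun u v w => ⟨OOperator.prec_prec_eq_prec_star hr hα u v w, hlr _ _ _,
    OOperator.succ_succ_eq_star_succ hl hα u v w⟩, OOperator.map_star hα⟩

/-- An O-operator α : V → A on an A-bimodule (V,ℓ,r) induces a
dendriform dialgebra structure on V via u ≺ v = u r(α(v)), u ≻ v = ℓ(α(u))v,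
and α : (V, ≺+≻) → (A,*) is an algebra homomorphism. -/
theorem O_operator_dendriform_dialgebra_domain
    (k : Type*) [CommRing k]
    (A : Type*) [AddCommGroup A] [Module k A]
    (V : Type*) [AddCommGroup V] [Module k V]
    (mulA : A →ₗ[k] A →ₗ[k] A)
    (mulA_assoc : ∀ x y z : A, mulA (mulA x y) z = mulA x (mulA y z))
    (l r : A →ₗ[k] Module.End k V)
    (hl : ∀ x y : A, ∀ v : V, l (mulA x y) v = l x (l y v))
    (hr : ∀ x y : A, ∀ v : V, r (mulA x y) v = r y (r x v))
    (hlr : ∀ x y : A, ∀ v : V, r y (l x v) = l x (r y v))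
    (α : V →ₗ[k] A)
    (hα : ∀ u v : V,
      mulA (α u) (α v) = α (l (α u) v) + α (r (α v) u)) :
    (∀ u v w : V,
      -- (u ≺ v) ≺ w = u ≺ (v ⋆ w)
      r (α w) (r (α v) u) = r (α (r (α w) v + l (α v) w)) u ∧
      -- (u ≻ v) ≺ w = u ≻ (v ≺ w)
      r (α w) (l (α u) v) = l (α u) (r (α w) v) ∧
      -- u ≻ (v ≻ w) = (u ⋆ v) ≻ w
      l (α u) (l (α v) w) = l (α (r (α v) u + l (α u) v)) w) ∧
    -- α is a k-algebra homomorphism from (V, ≺+≻) to (A,*)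
    (∀ u v : V, α (r (α v) u + l (α u) v) = mulA (α u) (α v)) :=
  O_operator_dendriform_dialgebra_domain_general k A V mulA l r hl hr hlr α hα
end

section
/- Let (V, ≺, ≻, •) be a dendriform trialgebra and define x * y := x≺y + x≻y + x•y. Define L_≻, R_≺ : V → End(V) by L_≻(x)(y) = x≻y and R_≺(x)(y) = y≺x. Then (V, •, L_≻, R_≺) is a (V,*)-bimodule k-algebra. -/
/-! Each bimodule and compatibility condition is, up to orientation, one of the seven
Loday–Ronco axioms: the left and right module laws are axioms 3 and 1, the mixed law is axiom 2,
and the three compatibilities with `•` are axioms 4, 6 and 5. Associativity of `*` is the sum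
of all seven: expanding `(x * y) ≺ z` with axioms 1, 2, 6 and `(x * y) • z` with axioms 5, 4, 7,
and adding axiom 3 for `(x * y) ≻ z`, regroups into `x ≺ (y * z) + x ≻ (y * z) + x • (y * z)`. -/

namespace DendriformTrialgebra

variable {k V : Type*} [CommRing k] [AddCommGroup V] [Module k V]
  {prec succ bul : V →ₗ[k] V →ₗ[k] V}

theorem prec_sum_left
    (ax1 : ∀ x y z : V, prec (prec x y) z = prec x (prec y z + succ y z + bul y z))
    (ax2 : ∀ x y z : V, prec (succ x y) z = succ x (prec y z))
    (ax6 : ∀ x y z : V, prec (bul x y) z = bul x (prec y z)) (x y z : V) :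
    prec (prec x y + succ x y + bul x y) z
      = prec x (prec y z + succ y z + bul y z) + succ x (prec y z) + bul x (prec y z) := by
  simp only [map_add, LinearMap.add_apply, ax1, ax2, ax6]

theorem bul_sum_left
    (ax4 : ∀ x y z : V, bul (succ x y) z = succ x (bul y z))
    (ax5 : ∀ x y z : V, bul (prec x y) z = bul x (succ y z))
    (ax7 : ∀ x y z : V, bul (bul x y) z = bul x (bul y z)) (x y z : V) :
    bul (prec x y + succ x y + bul x y) z
      = bul x (succ y z) + succ x (bul y z) + bul x (bul y z) := by
  simp only [map_add, LinearMap.add_apply, ax4, ax5, ax7]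

theorem sum_assoc
    (ax1 : ∀ x y z : V, prec (prec x y) z = prec x (prec y z + succ y z + bul y z))
    (ax2 : ∀ x y z : V, prec (succ x y) z = succ x (prec y z))
    (ax3 : ∀ x y z : V, succ (prec x y + succ x y + bul x y) z = succ x (succ y z))
    (ax4 : ∀ x y z : V, bul (succ x y) z = succ x (bul y z))
    (ax5 : ∀ x y z : V, bul (prec x y) z = bul x (succ y z))
    (ax6 : ∀ x y z : V, prec (bul x y) z = bul x (prec y z))
    (ax7 : ∀ x y z : V, bul (bul x y) z = bul x (bul y z)) (x y z : V) :
    prec (prec x y + succ x y + bul x y) z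
        + succ (prec x y + succ x y + bul x y) z
        + bul (prec x y + succ x y + bul x y) z
      = prec x (prec y z + succ y z + bul y z)
        + succ x (prec y z + succ y z + bul y z)
        + bul x (prec y z + succ y z + bul y z) := by
  rw [prec_sum_left ax1 ax2 ax6, ax3, bul_sum_left ax4 ax5 ax7]
  simp only [map_add]
  abel

end DendriformTrialgebra

open DendriformTrialgebra in
/-- For a dendriform trialgebra (V,≺,≻,•) with
x * y = x≺y + x≻y + x•y, the data (V, •, L_≻, R_≺), where L_≻(x)y = x≻y and
y R_≺(x) = y≺x, is a (V,*)-bimodule k-algebra. -/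
theorem dendriform_trialgebra_bimodule_algebra
    (k : Type*) [CommRing k] (V : Type*) [AddCommGroup V] [Module k V]
    (prec succ bul : V →ₗ[k] V →ₗ[k] V)
    (ax1 : ∀ x y z : V,
      prec (prec x y) z = prec x (prec y z + succ y z + bul y z))
    (ax2 : ∀ x y z : V, prec (succ x y) z = succ x (prec y z))
    (ax3 : ∀ x y z : V,
      succ (prec x y + succ x y + bul x y) z = succ x (succ y z))
    (ax4 : ∀ x y z : V, bul (succ x y) z = succ x (bul y z))
    (ax5 : ∀ x y z : V, bul (prec x y) z = bul x (succ y z))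
    (ax6 : ∀ x y z : V, prec (bul x y) z = bul x (prec y z))
    (ax7 : ∀ x y z : V, bul (bul x y) z = bul x (bul y z)) :
    -- the product * = ≺ + ≻ + • is associative
    (∀ x y z : V,
      prec (prec x y + succ x y + bul x y) z
        + succ (prec x y + succ x y + bul x y) z
        + bul (prec x y + succ x y + bul x y) z
      = prec x (prec y z + succ y z + bul y z)
        + succ x (prec y z + succ y z + bul y z)
        + bul x (prec y z + succ y z + bul y z)) ∧
    -- (V, •) is a k-algebra
    (∀ v w u : V, bul (bul v w) u = bul v (bul w u)) ∧
    ∀ x y v w : V,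
      -- L_≻(x*y)v = L_≻(x)(L_≻(y)v)
      succ (prec x y + succ x y + bul x y) v = succ x (succ y v) ∧
      -- v R_≺(x*y) = (v R_≺(x)) R_≺(y)
      prec v (prec x y + succ x y + bul x y) = prec (prec v x) y ∧
      -- (L_≻(x)v) R_≺(y) = L_≻(x)(v R_≺(y))
      prec (succ x v) y = succ x (prec v y) ∧
      -- L_≻(x)(v • w) = (L_≻(x)v) • w
      succ x (bul v w) = bul (succ x v) w ∧
      -- (v • w) R_≺(x) = v • (w R_≺(x))
      prec (bul v w) x = bul v (prec w x) ∧
      -- (v R_≺(x)) • w = v • (L_≻(x)w)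
      bul (prec v x) w = bul v (succ x w) :=
  ⟨sum_assoc ax1 ax2 ax3 ax4 ax5 ax6 ax7, ax7, fun x y v w =>
    ⟨ax3 x y v, (ax1 v x y).symm, ax2 x v y, (ax4 x v w).symm, ax6 v w x, ax5 v x w⟩⟩
end

section
/- Let α : R → A be an invertible (bijective) O-operator on the algebra (R,∘,ℓ,r) of weight λ. Then the operations x ≺ y := α(α⁻¹(x) r(y)), x ≻ y := α(ℓ(x) α⁻¹(y)), x • y := λ α(α⁻¹(x) ∘ α⁻¹(y)) define a dendriform trialgebra structure on A, and the associative product on A splits: x*y = x≺y + x≻y + x•y for all x,y ∈ A. -/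
/-!
Transporting along α⁻¹, the three operations on `A` become the right action `r`, the left action
`ℓ` and the scaled product `λ ∘` of `R`. Each trialgebra axiom is then one of the bimodule
algebra axioms of `(R, ∘, ℓ, r)`, read through α, with the O-operator identity supplying the
splitting `x * y = x ≺ y + x ≻ y + x • y` needed to turn `r (x * y)` and `ℓ (x * y)` into the
actions of `x ≺ y + x ≻ y + x • y`.
-/

namespace OOperator

variable {k A R : Type*} [CommRing k] [AddCommGroup A] [Module k A] [AddCommGroup R] [Module k R]
  (α : R ≃ₗ[k] A)

def prec (r : A →ₗ[k] Module.End k R) (x y : A) : A := α (r y (α.symm x))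

def succ (l : A →ₗ[k] Module.End k R) (x y : A) : A := α (l x (α.symm y))

def bullet (mulR : R →ₗ[k] R →ₗ[k] R) (lam : k) (x y : A) : A :=
  lam • α (mulR (α.symm x) (α.symm y))

variable {α} {mulA : A →ₗ[k] A →ₗ[k] A} {mulR : R →ₗ[k] R →ₗ[k] R} {l r : A →ₗ[k] Module.End k R}
  {lam : k}

theorem mul_eq_prec_add_succ_add_bullet
    (hα : ∀ u v : R, mulA (α u) (α v) = α (l (α u) v) + α (r (α v) u) + lam • α (mulR u v))
    (x y : A) : mulA x y = prec α r x y + succ α l x y + bullet α mulR lam x y := by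
  have h := hα (α.symm x) (α.symm y)
  simp only [LinearEquiv.apply_symm_apply] at h
  rw [h, prec, succ, bullet, add_comm (α _) (α _)]

theorem prec_prec (hr : ∀ x y : A, ∀ v : R, r (mulA x y) v = r y (r x v)) (x y z : A) :
    prec α r (prec α r x y) z = prec α r x (mulA y z) := by
  simp only [prec, LinearEquiv.symm_apply_apply, hr]

theorem succ_succ (hl : ∀ x y : A, ∀ v : R, l (mulA x y) v = l x (l y v)) (x y z : A) :
    succ α l x (succ α l y z) = succ α l (mulA x y) z := by
  simp only [succ, LinearEquiv.symm_apply_apply, hl]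

theorem prec_succ (hlr : ∀ x y : A, ∀ v : R, r y (l x v) = l x (r y v)) (x y z : A) :
    prec α r (succ α l x y) z = succ α l x (prec α r y z) := by
  simp only [prec, succ, LinearEquiv.symm_apply_apply, hlr]

theorem bullet_succ (hc1 : ∀ x : A, ∀ v w : R, l x (mulR v w) = mulR (l x v) w) (x y z : A) :
    bullet α mulR lam (succ α l x y) z = succ α l x (bullet α mulR lam y z) := by
  simp only [bullet, succ, map_smul, LinearEquiv.symm_apply_apply, hc1]

theorem bullet_prec (hc3 : ∀ x : A, ∀ v w : R, mulR (r x v) w = mulR v (l x w)) (x y z : A) :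
    bullet α mulR lam (prec α r x y) z = bullet α mulR lam x (succ α l y z) := by
  simp only [bullet, prec, succ, LinearEquiv.symm_apply_apply, hc3]

theorem prec_bullet (hc2 : ∀ x : A, ∀ v w : R, r x (mulR v w) = mulR v (r x w)) (x y z : A) :
    prec α r (bullet α mulR lam x y) z = bullet α mulR lam x (prec α r y z) := by
  simp only [bullet, prec, map_smul, LinearEquiv.symm_apply_apply, hc2]

theorem bullet_assoc (mulR_assoc : ∀ u v w : R, mulR (mulR u v) w = mulR u (mulR v w))
    (x y z : A) :
    bullet α mulR lam (bullet α mulR lam x y) z = bullet α mulR lam x (bullet α mulR lam y z) := by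
  simp only [bullet, map_smul, LinearEquiv.symm_apply_apply, LinearMap.smul_apply, mulR_assoc]

end OOperator

open OOperator

theorem invertible_O_operator_dendriform_trialgebra_range_general
    (k : Type*) [CommRing k]
    (A : Type*) [AddCommGroup A] [Module k A]
    (R : Type*) [AddCommGroup R] [Module k R]
    (mulA : A →ₗ[k] A →ₗ[k] A)
    (mulR : R →ₗ[k] R →ₗ[k] R)
    (mulR_assoc : ∀ u v w : R, mulR (mulR u v) w = mulR u (mulR v w))
    (l r : A →ₗ[k] Module.End k R)
    (hl : ∀ x y : A, ∀ v : R, l (mulA x y) v = l x (l y v))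
    (hr : ∀ x y : A, ∀ v : R, r (mulA x y) v = r y (r x v))
    (hlr : ∀ x y : A, ∀ v : R, r y (l x v) = l x (r y v))
    (hc1 : ∀ x : A, ∀ v w : R, l x (mulR v w) = mulR (l x v) w)
    (hc2 : ∀ x : A, ∀ v w : R, r x (mulR v w) = mulR v (r x w))
    (hc3 : ∀ x : A, ∀ v w : R, mulR (r x v) w = mulR v (l x w))
    (lam : k) (α : R ≃ₗ[k] A)
    (hα : ∀ u v : R,
      mulA (α u) (α v)
        = α (l (α u) v) + α (r (α v) u) + lam • α (mulR u v)) :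
    let prec : A → A → A := fun x y => α (r y (α.symm x))
    let succ : A → A → A := fun x y => α (l x (α.symm y))
    let bul : A → A → A := fun x y => lam • α (mulR (α.symm x) (α.symm y))
    let star : A → A → A := fun x y => prec x y + succ x y + bul x y
    -- dendriform trialgebra axioms
    (∀ x y z : A,
      prec (prec x y) z = prec x (star y z) ∧
      prec (succ x y) z = succ x (prec y z) ∧
      succ (star x y) z = succ x (succ y z) ∧
      bul (succ x y) z = succ x (bul y z) ∧
      bul (prec x y) z = bul x (succ y z) ∧
      prec (bul x y) z = bul x (prec y z) ∧
      bul (bul x y) z = bul x (bul y z)) ∧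
    -- splitting of the associative product of A
    (∀ x y : A, mulA x y = star x y) := by
  intro prec succ bul star
  have hsplit : ∀ x y : A, mulA x y = star x y := mul_eq_prec_add_succ_add_bullet hα
  refine ⟨fun x y z => ⟨?_, prec_succ hlr x y z, ?_, bullet_succ hc1 x y z,
    bullet_prec hc3 x y z, prec_bullet hc2 x y z, bullet_assoc mulR_assoc x y z⟩, hsplit⟩
  · rw [← hsplit]
    exact prec_prec hr x y z
  · rw [← hsplit]
    exact (succ_succ hl x y z).symm

/-- An invertible O-operator α : R → A on the algebra
(R,∘,ℓ,r) of weight λ induces a dendriform trialgebra structure on A via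
x ≺ y = α(α⁻¹(x) r(y)), x ≻ y = α(ℓ(x) α⁻¹(y)), x • y = λα(α⁻¹(x)∘α⁻¹(y)),
and the associative product of A splits as * = ≺ + ≻ + •. -/
theorem invertible_O_operator_dendriform_trialgebra_range
    (k : Type*) [CommRing k]
    (A : Type*) [AddCommGroup A] [Module k A]
    (R : Type*) [AddCommGroup R] [Module k R]
    (mulA : A →ₗ[k] A →ₗ[k] A)
    (mulA_assoc : ∀ x y z : A, mulA (mulA x y) z = mulA x (mulA y z))
    (mulR : R →ₗ[k] R →ₗ[k] R)
    (mulR_assoc : ∀ u v w : R, mulR (mulR u v) w = mulR u (mulR v w))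
    (l r : A →ₗ[k] Module.End k R)
    (hl : ∀ x y : A, ∀ v : R, l (mulA x y) v = l x (l y v))
    (hr : ∀ x y : A, ∀ v : R, r (mulA x y) v = r y (r x v))
    (hlr : ∀ x y : A, ∀ v : R, r y (l x v) = l x (r y v))
    (hc1 : ∀ x : A, ∀ v w : R, l x (mulR v w) = mulR (l x v) w)
    (hc2 : ∀ x : A, ∀ v w : R, r x (mulR v w) = mulR v (r x w))
    (hc3 : ∀ x : A, ∀ v w : R, mulR (r x v) w = mulR v (l x w))
    (lam : k) (α : R ≃ₗ[k] A)
    (hα : ∀ u v : R,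
      mulA (α u) (α v)
        = α (l (α u) v) + α (r (α v) u) + lam • α (mulR u v)) :
    let prec : A → A → A := fun x y => α (r y (α.symm x))
    let succ : A → A → A := fun x y => α (l x (α.symm y))
    let bul : A → A → A := fun x y => lam • α (mulR (α.symm x) (α.symm y))
    let star : A → A → A := fun x y => prec x y + succ x y + bul x y
    -- dendriform trialgebra axioms
    (∀ x y z : A,
      prec (prec x y) z = prec x (star y z) ∧
      prec (succ x y) z = succ x (prec y z) ∧
      succ (star x y) z = succ x (succ y z) ∧
      bul (succ x y) z = succ x (bul y z) ∧
      bul (prec x y) z = bul x (succ y z) ∧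
      prec (bul x y) z = bul x (prec y z) ∧
      bul (bul x y) z = bul x (bul y z)) ∧
    -- splitting of the associative product of A
    (∀ x y : A, mulA x y = star x y) :=
  invertible_O_operator_dendriform_trialgebra_range_general k A R mulA mulR mulR_assoc l r hl hr hlr
    hc1 hc2 hc3 lam α hα
end

section
/- Let α : V → A be an invertible O-operator on the A-bimodule (V,ℓ,r). Then x ≺ y := α(α⁻¹(x) r(y)) and x ≻ y := α(ℓ(x) α⁻¹(y)) define a dendriform dialgebra structure on A with x*y = x≺y + x≻y for all x,y ∈ A. -/
/-!
Transport of structure along `α`: the left and right actions of `A` on `V`, pulled back to `A`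
through `α⁻¹`, give the two halves `≻` and `≺` of the product. The bimodule axioms
`ℓ(xy) = ℓ(x)ℓ(y)`, `r(xy) = r(y)r(x)` and `[ℓ(x), r(y)] = 0` become, after cancelling
`α⁻¹ ∘ α`, the three dendriform axioms with `x * y` in place of `x ≺ y + x ≻ y`, and the
O-operator identity says exactly that `x * y = x ≺ y + x ≻ y`.
-/

section InvertibleOOperator

variable {k A V : Type*} [CommSemiring k] [AddCommMonoid A] [Module k A]
  [AddCommMonoid V] [Module k V] {mulA : A →ₗ[k] A →ₗ[k] A} (l r : A →ₗ[k] Module.End k V)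
  (α : V ≃ₗ[k] A)

def dendriformPrec (x y : A) : A := α (r y (α.symm x))

def dendriformSucc (x y : A) : A := α (l x (α.symm y))

variable {l r}

theorem mul_eq_dendriformPrec_add_dendriformSucc
    (hα : ∀ u v : V, mulA (α u) (α v) = α (l (α u) v) + α (r (α v) u)) (x y : A) :
    mulA x y = dendriformPrec r α x y + dendriformSucc l α x y := by
  simpa only [dendriformPrec, dendriformSucc, LinearEquiv.apply_symm_apply, add_comm] using hα (α.symm x) (α.symm y)

theorem dendriformPrec_dendriformPrec
    (hr : ∀ x y : A, ∀ v : V, r (mulA x y) v = r y (r x v)) (x y z : A) :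
    dendriformPrec r α (dendriformPrec r α x y) z = dendriformPrec r α x (mulA y z) := by
  simp only [dendriformPrec, LinearEquiv.symm_apply_apply, hr]

theorem dendriformPrec_dendriformSucc
    (hlr : ∀ x y : A, ∀ v : V, r y (l x v) = l x (r y v)) (x y z : A) :
    dendriformPrec r α (dendriformSucc l α x y) z =
      dendriformSucc l α x (dendriformPrec r α y z) := by
  simp only [dendriformPrec, dendriformSucc, LinearEquiv.symm_apply_apply, hlr]

theorem dendriformSucc_dendriformSucc
    (hl : ∀ x y : A, ∀ v : V, l (mulA x y) v = l x (l y v)) (x y z : A) :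
    dendriformSucc l α x (dendriformSucc l α y z) = dendriformSucc l α (mulA x y) z := by
  simp only [dendriformSucc, LinearEquiv.symm_apply_apply, hl]

end InvertibleOOperator

theorem invertible_O_operator_dendriform_dialgebra_range_general
    (k : Type*) [CommRing k]
    (A : Type*) [AddCommGroup A] [Module k A]
    (V : Type*) [AddCommGroup V] [Module k V]
    (mulA : A →ₗ[k] A →ₗ[k] A)
    (l r : A →ₗ[k] Module.End k V)
    (hl : ∀ x y : A, ∀ v : V, l (mulA x y) v = l x (l y v))
    (hr : ∀ x y : A, ∀ v : V, r (mulA x y) v = r y (r x v))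
    (hlr : ∀ x y : A, ∀ v : V, r y (l x v) = l x (r y v))
    (α : V ≃ₗ[k] A)
    (hα : ∀ u v : V,
      mulA (α u) (α v) = α (l (α u) v) + α (r (α v) u)) :
    let prec : A → A → A := fun x y => α (r y (α.symm x))
    let succ : A → A → A := fun x y => α (l x (α.symm y))
    let star : A → A → A := fun x y => prec x y + succ x y
    -- dendriform dialgebra axioms
    (∀ x y z : A,
      prec (prec x y) z = prec x (star y z) ∧
      prec (succ x y) z = succ x (prec y z) ∧
      succ x (succ y z) = succ (star x y) z) ∧
    -- splitting of the associative product of A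
    (∀ x y : A, mulA x y = star x y) := by
  intro prec succ star
  have h_split : ∀ x y : A, mulA x y = star x y :=
    mul_eq_dendriformPrec_add_dendriformSucc α hα
  refine ⟨fun x y z => ⟨?_, dendriformPrec_dendriformSucc α hlr x y z, ?_⟩, h_split⟩
  · rw [← h_split]
    exact dendriformPrec_dendriformPrec α hr x y z
  · rw [← h_split]
    exact dendriformSucc_dendriformSucc α hl x y z

/-- An invertible O-operator α : V → A on the A-bimodule
(V,ℓ,r) induces a dendriform dialgebra structure on A via
x ≺ y = α(α⁻¹(x) r(y)), x ≻ y = α(ℓ(x) α⁻¹(y)), with * = ≺ + ≻. -/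
theorem invertible_O_operator_dendriform_dialgebra_range
    (k : Type*) [CommRing k]
    (A : Type*) [AddCommGroup A] [Module k A]
    (V : Type*) [AddCommGroup V] [Module k V]
    (mulA : A →ₗ[k] A →ₗ[k] A)
    (mulA_assoc : ∀ x y z : A, mulA (mulA x y) z = mulA x (mulA y z))
    (l r : A →ₗ[k] Module.End k V)
    (hl : ∀ x y : A, ∀ v : V, l (mulA x y) v = l x (l y v))
    (hr : ∀ x y : A, ∀ v : V, r (mulA x y) v = r y (r x v))
    (hlr : ∀ x y : A, ∀ v : V, r y (l x v) = l x (r y v))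
    (α : V ≃ₗ[k] A)
    (hα : ∀ u v : V,
      mulA (α u) (α v) = α (l (α u) v) + α (r (α v) u)) :
    let prec : A → A → A := fun x y => α (r y (α.symm x))
    let succ : A → A → A := fun x y => α (l x (α.symm y))
    let star : A → A → A := fun x y => prec x y + succ x y
    -- dendriform dialgebra axioms
    (∀ x y z : A,
      prec (prec x y) z = prec x (star y z) ∧
      prec (succ x y) z = succ x (prec y z) ∧
      succ x (succ y z) = succ (star x y) z) ∧
    -- splitting of the associative product of A
    (∀ x y : A, mulA x y = star x y) :=
  invertible_O_operator_dendriform_dialgebra_range_general k A V mulA l r hl hr hlr α hα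
end
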